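/- Assume CH, let T, U be normal countably closed ω₂-Aronszajn trees with levels of size ω₁. Let p ∈ P(T,U) and β ∈ A_p be a limit point of ω₂ ∩ cof(ω₁). Then there is q ≤ p which is injective on β: for all distinct x, y ∈ dom(f_q) of height β there is γ ∈ A_q ∩ β with p_T(x,γ) ≠ p_T(y,γ). -/

import Mathlib

universe u v

/-- A set-theoretic tree: a strict partial order in which the set of predecessors
of any node is well-ordered. -/
structure STree (α : Type u) where
  lt : α → α → Prop
  irrefl : ∀ x, ¬ lt x x
  trans : ∀ {x y z}, lt x y → lt y z → lt x z
  wo : ∀ x : α, IsWellOrder {y // lt y x} (fun a b => lt a.1 b.1)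

namespace STree

variable {α β : Type u}

/-- The height of a node: the order type of its set of predecessors. -/
noncomputable def ht (T : STree α) (x : α) : Ordinal :=
  @Ordinal.type {y // T.lt y x} (fun a b => T.lt a.1 b.1) (T.wo x)

/-- The reflexive closure of the tree order. -/
def le (T : STree α) (x y : α) : Prop := T.lt x y ∨ x = y

/-- `T` is a `κ`-tree: height `κ` and all levels of size `< κ`. -/
def IsKTree (T : STree α) (κ : Cardinal) : Prop :=
  (∀ x, T.ht x < κ.ord) ∧ (∀ γ < κ.ord, ∃ x, T.ht x = γ) ∧
    ∀ γ : Ordinal, Cardinal.mk {x // T.ht x = γ} < κ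

/-- `T` is a normal `κ`-tree. -/
def IsNormalTree (T : STree α) (κ : Cardinal) : Prop :=
  (∀ x, ∀ γ, T.ht x < γ → γ < κ.ord → ∃ y, T.lt x y ∧ T.ht y = γ) ∧
  (∀ x y, x ≠ y → T.ht x = T.ht y → Order.IsSuccLimit (T.ht x) →
    ∃ z, T.lt z x ∧ ¬ T.lt z y) ∧
  (∀ x, ∃ y z, T.lt x y ∧ T.lt x z ∧ ¬ T.le y z ∧ ¬ T.le z y)

/-- A chain in `T`: a linearly ordered subset. -/
def IsChain (T : STree α) (b : Set α) : Prop :=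
  ∀ x ∈ b, ∀ y ∈ b, T.le x y ∨ T.le y x

/-- `T` is countably closed: every countable chain has an upper bound. -/
def CClosed (T : STree α) : Prop :=
  ∀ b : Set α, b.Countable → T.IsChain b → ∃ z, ∀ x ∈ b, T.le x z

/-- `T` is a `κ`-Aronszajn tree: a `κ`-tree with no cofinal chain. -/
def Aronszajn (T : STree α) (κ : Cardinal) : Prop :=
  T.IsKTree κ ∧ ¬ ∃ b : Set α, T.IsChain b ∧ ∀ γ < κ.ord, ∃ x ∈ b, T.ht x = γ

end STree

/-- The continuum hypothesis. -/
def CH : Prop := (2 : Cardinal.{0}) ^ Cardinal.aleph0 = Cardinal.aleph 1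

/-- A pair `(A, F)` as in the forcing `ℙ(T,U)`: a set of ordinals together with the
graph of a partial function from `T` to `U`. -/
structure PPair (α β : Type u) where
  A : Set Ordinal.{v}
  F : Set (α × β)

/-- Ordinals below `ω₂` of cofinality `ω₁`. -/
def cofW1 : Set Ordinal :=
  {γ | γ < (Cardinal.aleph 2).ord ∧ Ordinal.cof γ = Cardinal.aleph 1}

/-- The domain of a graph. -/
def dom' {α β : Type u} (F : Set (α × β)) : Set α := {x | ∃ y, (x, y) ∈ F}

/-- `p = (A, F)` is a condition in the forcing poset `ℙ(T,U)`. -/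
def IsCond {α β : Type u} (T : STree α) (U : STree β) (p : PPair α β) : Prop :=
  p.A.Countable ∧ p.A ⊆ cofW1 ∧
  (∀ q ∈ p.F, ∀ r ∈ p.F, q.1 = r.1 → q.2 = r.2) ∧
  (∀ q ∈ p.F, ∀ r ∈ p.F, q.2 = r.2 → q.1 = r.1) ∧
  (dom' p.F).Countable ∧
  (∀ q ∈ p.F, T.ht q.1 ∈ p.A) ∧
  (∀ q ∈ p.F, ∀ z : α, T.lt z q.1 → T.ht z ∈ p.A → z ∈ dom' p.F) ∧
  (∀ q ∈ p.F, ∀ b ∈ p.A, T.ht q.1 < b → ∃ r ∈ p.F, T.ht r.1 = b ∧ T.lt q.1 r.1) ∧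
  (∀ q ∈ p.F, U.ht q.2 = T.ht q.1) ∧
  (∀ q ∈ p.F, ∀ r ∈ p.F, T.lt q.1 r.1 → U.lt q.2 r.2)

/-- The order on `ℙ(T,U)`: `p ≤ q` iff `p` extends `q` in both coordinates. -/
def CondLe {α β : Type u} (p q : PPair α β) : Prop := q.A ⊆ p.A ∧ q.F ⊆ p.F

/-- A normal countably closed `ω₂`-Aronszajn tree all of whose levels have size `ω₁`. -/
def NiceTree {α : Type u} (T : STree α) : Prop :=
  T.IsKTree (Cardinal.aleph 2) ∧ T.IsNormalTree (Cardinal.aleph 2) ∧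
    T.CClosed ∧ T.Aronszajn (Cardinal.aleph 2) ∧
    ∀ γ < (Cardinal.aleph 2).ord, Cardinal.mk {x // T.ht x = γ} = Cardinal.aleph 1

/-- `p` is injective on level `b`: distinct nodes of `dom f_p` of height `b` are
separated by their projections to some level in `A_p ∩ b`. -/
def InjOn' {α β : Type u} (T : STree α) (p : PPair α β) (b : Ordinal) : Prop :=
  ∀ q ∈ p.F, ∀ r ∈ p.F, T.ht q.1 = b → T.ht r.1 = b → q.1 ≠ r.1 →
    ∃ γ ∈ p.A, γ < b ∧
      ∀ z w : α, T.le z q.1 → T.ht z = γ → T.le w r.1 → T.ht w = γ → z ≠ w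


/-!
By normality, two distinct nodes of the limit level `b` already differ at every level in a final
segment of `b`, both in `T` and, through `f_p`, in `U`. There are countably many such pairs and
`A_p ∩ b` is countable, so since `cf b = ω₁` some `γ < b` of cofinality `ω₁` lies above all the
splitting points and above `A_p ∩ b`. Add `γ` to `A_p` and the projections of `f_p` to level `γ`.
As no level of `A_p` lies in `[γ, b)`, the projection to `γ` of a node of `dom f_p` above `γ`
factors through a node of level `b`; there distinct nodes have distinct projections in both
trees, so the projected map is a well-defined injection and the result is a condition.
-/
namespace STree

variable {α : Type u} (T : STree α) {x y z z' : α} {γ : Ordinal.{u}}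

theorem ht_eq_typein (h : T.lt z x) :
    T.ht z = @Ordinal.typein {y // T.lt y x} (fun a b => T.lt a.1 b.1) (T.wo x) ⟨z, h⟩ := by
  have := T.wo x
  have := T.wo z
  rw [← Ordinal.type_subrel]
  exact Ordinal.type_eq.mpr ⟨⟨⟨fun y => ⟨⟨y.1, T.trans y.2 h⟩, y.2⟩,
    fun c => ⟨c.1.1, c.2⟩, fun _ => rfl, fun _ => rfl⟩, Iff.rfl⟩⟩

theorem ht_lt_ht (h : T.lt z x) : T.ht z < T.ht x := by
  have := T.wo x
  rw [T.ht_eq_typein h]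
  exact Ordinal.typein_lt_type _ _

theorem exists_lt_ht_eq (h : γ < T.ht x) : ∃ z, T.lt z x ∧ T.ht z = γ := by
  have := T.wo x
  obtain ⟨a, ha⟩ := Ordinal.typein_surj (fun a b : {y // T.lt y x} => T.lt a.1 b.1) h
  exact ⟨a.1, a.2, by rw [T.ht_eq_typein a.2, ← ha]⟩

theorem lt_trichotomy_of_lt (hz : T.lt z x) (hz' : T.lt z' x) :
    T.lt z z' ∨ z = z' ∨ T.lt z' z := by
  have := T.wo x
  rcases trichotomous_of (fun a b : {y // T.lt y x} => T.lt a.1 b.1) ⟨z, hz⟩ ⟨z', hz'⟩ with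
    h | h | h
  exacts [Or.inl h, Or.inr (Or.inl (congrArg Subtype.val h)), Or.inr (Or.inr h)]

theorem lt_of_ht_lt (hz : T.lt z x) (hz' : T.lt z' x) (h : T.ht z < T.ht z') : T.lt z z' := by
  rcases T.lt_trichotomy_of_lt hz hz' with h' | rfl | h'
  · exact h'
  · exact absurd h (lt_irrefl _)
  · exact absurd (T.ht_lt_ht h') h.not_gt

theorem eq_of_ht_eq (hz : T.lt z x) (hz' : T.lt z' x) (h : T.ht z = T.ht z') : z = z' := by
  rcases T.lt_trichotomy_of_lt hz hz' with h' | h' | h'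
  · exact absurd (T.ht_lt_ht h') h.not_lt
  · exact h'
  · exact absurd (T.ht_lt_ht h') h.symm.not_lt

/-- The paper's `p_T(x, γ)`; junk value `x` when `ht x ≤ γ`. -/
noncomputable def proj (x : α) (γ : Ordinal.{u}) : α :=
  open Classical in if h : ∃ z, T.lt z x ∧ T.ht z = γ then h.choose else x

theorem proj_spec (h : γ < T.ht x) : T.lt (T.proj x γ) x ∧ T.ht (T.proj x γ) = γ := by
  have hex := T.exists_lt_ht_eq h
  rw [proj, dif_pos hex]
  exact hex.choose_spec

theorem proj_lt (h : γ < T.ht x) : T.lt (T.proj x γ) x := (T.proj_spec h).1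

theorem ht_proj (h : γ < T.ht x) : T.ht (T.proj x γ) = γ := (T.proj_spec h).2

theorem proj_eq_of_lt (hz : T.lt z x) (h : T.ht z = γ) : T.proj x γ = z :=
  have hγ : γ < T.ht x := h ▸ T.ht_lt_ht hz
  T.eq_of_ht_eq (T.proj_lt hγ) hz ((T.ht_proj hγ).trans h.symm)

theorem eq_proj_of_le (hz : T.le z x) (h : T.ht z = γ) (hγ : γ < T.ht x) : z = T.proj x γ := by
  rcases hz with hz | rfl
  · exact (T.proj_eq_of_lt hz h).symm
  · exact absurd h hγ.ne'

theorem proj_eq_proj_of_le (hyx : T.le y x) (h : γ < T.ht y) : T.proj x γ = T.proj y γ := by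
  rcases hyx with hyx | rfl
  · exact T.proj_eq_of_lt (T.trans (T.proj_lt h) hyx) (T.ht_proj h)
  · rfl

theorem lt_proj_of_lt (hz : T.lt z x) (hzγ : T.ht z < γ) (hγ : γ < T.ht x) :
    T.lt z (T.proj x γ) :=
  T.lt_of_ht_lt hz (T.proj_lt hγ) (by rwa [T.ht_proj hγ])

variable {T} in
theorem IsNormalTree.exists_proj_ne {κ : Cardinal} (hT : T.IsNormalTree κ) (hxy : x ≠ y)
    (hh : T.ht x = T.ht y) (hlim : Order.IsSuccLimit (T.ht x)) :
    ∃ δ < T.ht x, ∀ γ, δ < γ → γ < T.ht x → T.proj x γ ≠ T.proj y γ := by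
  obtain ⟨z₀, hz₀x, hz₀y⟩ := hT.2.1 x y hxy hh hlim
  refine ⟨T.ht z₀, T.ht_lt_ht hz₀x, fun γ hz₀γ hγ hproj => hz₀y ?_⟩
  have hz₀ := T.lt_proj_of_lt hz₀x hz₀γ hγ
  rw [hproj] at hz₀
  exact T.trans hz₀ (T.proj_lt (hh ▸ hγ))

end STree

theorem exists_mem_cofW1_forall_lt {b : Ordinal.{u}} (hb : b.cof = Cardinal.aleph 1)
    (hblim : ∀ γ < b, ∃ δ ∈ cofW1, γ < δ ∧ δ < b) {C : Set Ordinal.{u}} (hC : C.Countable)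
    (hCb : ∀ δ ∈ C, δ < b) : ∃ γ ∈ cofW1, (∀ δ ∈ C, δ < γ) ∧ γ < b := by
  have hCcof : Cardinal.mk C < (Ordinal.lift.{u + 1} b).cof := by
    rw [← Ordinal.lift_cof, hb, Cardinal.lift_aleph, Ordinal.lift_one]
    exact (Cardinal.le_aleph0_iff_set_countable.2 hC).trans_lt Cardinal.aleph0_lt_aleph_one
  obtain ⟨γ, hγ, hCγ, hγb⟩ := hblim _ (Ordinal.sSup_lt_of_lt_cof hCcof hCb)
  exact ⟨γ, hγ, fun δ hδ => (le_csSup ⟨b, fun δ hδ => (hCb δ hδ).le⟩ hδ).trans_lt hCγ, hγb⟩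

theorem dom'_subset_image_fst {α β : Type u} (F : Set (α × β)) : dom' F ⊆ Prod.fst '' F :=
  fun x ⟨y, hxy⟩ => ⟨(x, y), hxy, rfl⟩

namespace IsCond

variable {α β : Type u} {T : STree α} {U : STree β} {p : PPair α β} {q r : α × β} {z : α}
  {b γ : Ordinal.{u}}

theorem countable_A (hp : IsCond T U p) : p.A.Countable := hp.1

theorem A_subset_cofW1 (hp : IsCond T U p) : p.A ⊆ cofW1 := hp.2.1

theorem snd_eq_of_fst_eq (hp : IsCond T U p) (hq : q ∈ p.F) (hr : r ∈ p.F) (h : q.1 = r.1) :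
    q.2 = r.2 :=
  hp.2.2.1 q hq r hr h

theorem fst_eq_of_snd_eq (hp : IsCond T U p) (hq : q ∈ p.F) (hr : r ∈ p.F) (h : q.2 = r.2) :
    q.1 = r.1 :=
  hp.2.2.2.1 q hq r hr h

theorem countable_dom (hp : IsCond T U p) : (dom' p.F).Countable := hp.2.2.2.2.1

theorem ht_mem_A (hp : IsCond T U p) (hq : q ∈ p.F) : T.ht q.1 ∈ p.A := hp.2.2.2.2.2.1 q hq

theorem mem_dom_of_lt (hp : IsCond T U p) (hq : q ∈ p.F) (hz : T.lt z q.1)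
    (hzA : T.ht z ∈ p.A) : z ∈ dom' p.F :=
  hp.2.2.2.2.2.2.1 q hq z hz hzA

theorem exists_mem_ht_eq (hp : IsCond T U p) (hq : q ∈ p.F) (hb : b ∈ p.A)
    (hqb : T.ht q.1 < b) : ∃ r ∈ p.F, T.ht r.1 = b ∧ T.lt q.1 r.1 :=
  hp.2.2.2.2.2.2.2.1 q hq b hb hqb

theorem ht_snd (hp : IsCond T U p) (hq : q ∈ p.F) : U.ht q.2 = T.ht q.1 :=
  hp.2.2.2.2.2.2.2.2.1 q hq

theorem snd_lt_snd (hp : IsCond T U p) (hq : q ∈ p.F) (hr : r ∈ p.F) (h : T.lt q.1 r.1) :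
    U.lt q.2 r.2 :=
  hp.2.2.2.2.2.2.2.2.2 q hq r hr h

theorem countable_F (hp : IsCond T U p) : p.F.Countable := by
  have hmaps : Set.MapsTo Prod.fst p.F (dom' p.F) := fun q hq => ⟨q.2, hq⟩
  exact hmaps.countable_of_injOn (fun _ hq _ hr h => Prod.ext h (hp.snd_eq_of_fst_eq hq hr h))
    hp.countable_dom

theorem lt_ht_snd (hp : IsCond T U p) (hq : q ∈ p.F) (h : γ < T.ht q.1) : γ < U.ht q.2 :=
  hp.ht_snd hq ▸ h

theorem exists_mem_ht_eq_of_lt (hp : IsCond T U p) (hq : q ∈ p.F) (hz : T.lt z q.1)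
    (hb : b ∈ p.A) (hzb : T.ht z < b) : ∃ r ∈ p.F, T.ht r.1 = b ∧ T.lt z r.1 := by
  rcases lt_trichotomy b (T.ht q.1) with h | rfl | h
  · obtain ⟨w, hw⟩ := hp.mem_dom_of_lt hq (T.proj_lt h) (by rwa [T.ht_proj h])
    exact ⟨_, hw, T.ht_proj h, T.lt_proj_of_lt hz hzb h⟩
  · exact ⟨q, hq, rfl, hz⟩
  · obtain ⟨r, hr, hrb, hqr⟩ := hp.exists_mem_ht_eq hq hb h
    exact ⟨r, hr, hrb, T.trans hz hqr⟩

theorem exists_mem_ht_eq_le (hp : IsCond T U p) (hq : q ∈ p.F) (hb : b ∈ p.A)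
    (hbq : b ≤ T.ht q.1) : ∃ r ∈ p.F, T.ht r.1 = b ∧ T.le r.1 q.1 ∧ U.le r.2 q.2 := by
  rcases hbq.lt_or_eq with h | h
  · obtain ⟨w, hw⟩ := hp.mem_dom_of_lt hq (T.proj_lt h) (by rwa [T.ht_proj h])
    exact ⟨_, hw, T.ht_proj h, Or.inl (T.proj_lt h), Or.inl (hp.snd_lt_snd hw hq (T.proj_lt h))⟩
  · exact ⟨q, hq, h.symm, Or.inr rfl, Or.inr rfl⟩

theorem exists_proj_ne {κ : Cardinal} (hT : T.IsNormalTree κ) (hU : U.IsNormalTree κ)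
    (hp : IsCond T U p) (hq : q ∈ p.F) (hr : r ∈ p.F) (hqr : q.1 ≠ r.1)
    (hht : T.ht q.1 = T.ht r.1) (hlim : Order.IsSuccLimit (T.ht q.1)) :
    ∃ δ < T.ht q.1, ∀ γ, δ < γ → γ < T.ht q.1 →
      T.proj q.1 γ ≠ T.proj r.1 γ ∧ U.proj q.2 γ ≠ U.proj r.2 γ := by
  obtain ⟨δT, hδT, hsepT⟩ := hT.exists_proj_ne hqr hht hlim
  obtain ⟨δU, hδU, hsepU⟩ := hU.exists_proj_ne
    (fun h => hqr (hp.fst_eq_of_snd_eq hq hr h)) (by rw [hp.ht_snd hq, hp.ht_snd hr, hht])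
    (by rwa [hp.ht_snd hq])
  rw [hp.ht_snd hq] at hδU hsepU
  exact ⟨max δT δU, max_lt hδT hδU, fun γ hδγ hγ =>
    ⟨hsepT γ ((le_max_left _ _).trans_lt hδγ) hγ, hsepU γ ((le_max_right _ _).trans_lt hδγ) hγ⟩⟩

end IsCond

section AddLevel

variable {α β : Type u} {T : STree α} {U : STree β} {p : PPair α β} {b γ : Ordinal.{u}}

noncomputable def projPair (T : STree α) (U : STree β) (γ : Ordinal.{u}) (q : α × β) : α × β :=
  (T.proj q.1 γ, U.proj q.2 γ)

noncomputable def addLevel (T : STree α) (U : STree β) (p : PPair α β) (γ : Ordinal.{u}) :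
    PPair α β :=
  ⟨insert γ p.A, p.F ∪ projPair T U γ '' {q ∈ p.F | γ < T.ht q.1}⟩

theorem condLe_addLevel : CondLe (addLevel T U p γ) p :=
  ⟨Set.subset_insert _ _, Set.subset_union_left⟩

structure IsSplittingLevel (T : STree α) (U : STree β) (p : PPair α β) (b γ : Ordinal.{u}) :
    Prop where
  isCond : IsCond T U p
  mem_cofW1 : γ ∈ cofW1
  mem_A : b ∈ p.A
  lt : γ < b
  lt_of_mem_A : ∀ δ ∈ p.A, δ < b → δ < γ
  proj_ne : ∀ q ∈ p.F, ∀ r ∈ p.F, T.ht q.1 = b → T.ht r.1 = b → q.1 ≠ r.1 →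
    T.proj q.1 γ ≠ T.proj r.1 γ ∧ U.proj q.2 γ ≠ U.proj r.2 γ

namespace IsSplittingLevel

variable {q r : α × β}

theorem not_mem_A (h : IsSplittingLevel T U p b γ) : γ ∉ p.A :=
  fun hγ => lt_irrefl γ (h.lt_of_mem_A γ hγ h.lt)

theorem ht_ne (h : IsSplittingLevel T U p b γ) (hq : q ∈ p.F) : T.ht q.1 ≠ γ :=
  fun e => h.not_mem_A (e ▸ h.isCond.ht_mem_A hq)

theorem projPair_eq_of_lt_ht (h : IsSplittingLevel T U p b γ) (hq : q ∈ p.F)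
    (hγq : γ < T.ht q.1) : ∃ r ∈ p.F, T.ht r.1 = b ∧ projPair T U γ q = projPair T U γ r := by
  have hbq : b ≤ T.ht q.1 :=
    not_lt.1 fun hqb => hγq.not_gt (h.lt_of_mem_A _ (h.isCond.ht_mem_A hq) hqb)
  obtain ⟨r, hr, hrb, hrqT, hrqU⟩ := h.isCond.exists_mem_ht_eq_le hq h.mem_A hbq
  have hγr : γ < T.ht r.1 := hrb ▸ h.lt
  exact ⟨r, hr, hrb, Prod.ext (T.proj_eq_proj_of_le hrqT hγr)
    (U.proj_eq_proj_of_le hrqU (h.isCond.lt_ht_snd hr hγr))⟩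

theorem projPair_fst_eq_iff (h : IsSplittingLevel T U p b γ) (hq : q ∈ p.F) (hr : r ∈ p.F)
    (hγq : γ < T.ht q.1) (hγr : γ < T.ht r.1) :
    (projPair T U γ q).1 = (projPair T U γ r).1 ↔ (projPair T U γ q).2 = (projPair T U γ r).2 := by
  obtain ⟨q', hq', hq'b, hqq'⟩ := h.projPair_eq_of_lt_ht hq hγq
  obtain ⟨r', hr', hr'b, hrr'⟩ := h.projPair_eq_of_lt_ht hr hγr
  rw [hqq', hrr']
  by_cases hqr : q'.1 = r'.1
  · rw [Prod.ext hqr (h.isCond.snd_eq_of_fst_eq hq' hr' hqr)]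
    exact iff_of_true rfl rfl
  · obtain ⟨hT, hU⟩ := h.proj_ne q' hq' r' hr' hq'b hr'b hqr
    exact iff_of_false hT hU

theorem snd_eq_of_fst_eq (h : IsSplittingLevel T U p b γ) :
    ∀ q ∈ (addLevel T U p γ).F, ∀ r ∈ (addLevel T U p γ).F, q.1 = r.1 → q.2 = r.2 := by
  rintro q (hq | ⟨q₀, ⟨hq₀, hγq₀⟩, rfl⟩) r (hr | ⟨r₀, ⟨hr₀, hγr₀⟩, rfl⟩) hqr
  · exact h.isCond.snd_eq_of_fst_eq hq hr hqr
  · exact absurd (hqr ▸ T.ht_proj hγr₀) (h.ht_ne hq)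
  · exact absurd (hqr ▸ T.ht_proj hγq₀) (h.ht_ne hr)
  · exact (h.projPair_fst_eq_iff hq₀ hr₀ hγq₀ hγr₀).1 hqr

theorem fst_eq_of_snd_eq (h : IsSplittingLevel T U p b γ) :
    ∀ q ∈ (addLevel T U p γ).F, ∀ r ∈ (addLevel T U p γ).F, q.2 = r.2 → q.1 = r.1 := by
  have hp := h.isCond
  rintro q (hq | ⟨q₀, ⟨hq₀, hγq₀⟩, rfl⟩) r (hr | ⟨r₀, ⟨hr₀, hγr₀⟩, rfl⟩) hqr
  · exact hp.fst_eq_of_snd_eq hq hr hqr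
  · exact absurd ((hp.ht_snd hq).symm.trans (hqr ▸ U.ht_proj (hp.lt_ht_snd hr₀ hγr₀)))
      (h.ht_ne hq)
  · exact absurd ((hp.ht_snd hr).symm.trans (hqr ▸ U.ht_proj (hp.lt_ht_snd hq₀ hγq₀)))
      (h.ht_ne hr)
  · exact (h.projPair_fst_eq_iff hq₀ hr₀ hγq₀ hγr₀).2 hqr

theorem countable_dom (h : IsSplittingLevel T U p b γ) : (dom' (addLevel T U p γ).F).Countable :=
  have hF := h.isCond.countable_F
  ((hF.union ((hF.mono (Set.sep_subset _ _)).image _)).image Prod.fst).mono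
    (dom'_subset_image_fst _)

theorem ht_mem_A (h : IsSplittingLevel T U p b γ) :
    ∀ q ∈ (addLevel T U p γ).F, T.ht q.1 ∈ (addLevel T U p γ).A := by
  rintro q (hq | ⟨q₀, ⟨-, hγq₀⟩, rfl⟩)
  · exact Set.mem_insert_of_mem _ (h.isCond.ht_mem_A hq)
  · exact (T.ht_proj hγq₀).symm ▸ Set.mem_insert γ p.A

theorem mem_dom_of_lt (h : IsSplittingLevel T U p b γ) :
    ∀ q ∈ (addLevel T U p γ).F, ∀ z : α, T.lt z q.1 → T.ht z ∈ (addLevel T U p γ).A →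
      z ∈ dom' (addLevel T U p γ).F := by
  have hp := h.isCond
  rintro q (hq | ⟨q₀, ⟨hq₀, hγq₀⟩, rfl⟩) z hz (hzγ | hzA)
  · have hγq : γ < T.ht q.1 := hzγ ▸ T.ht_lt_ht hz
    exact ⟨_, Or.inr ⟨q, ⟨hq, hγq⟩, Prod.ext (T.proj_eq_of_lt hz hzγ) rfl⟩⟩
  · obtain ⟨w, hw⟩ := hp.mem_dom_of_lt hq hz hzA
    exact ⟨w, Or.inl hw⟩
  · exact absurd (T.ht_lt_ht hz) (by rw [hzγ]; exact (T.ht_proj hγq₀).not_gt)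
  · obtain ⟨w, hw⟩ := hp.mem_dom_of_lt hq₀ (T.trans hz (T.proj_lt hγq₀)) hzA
    exact ⟨w, Or.inl hw⟩

theorem exists_mem_ht_eq (h : IsSplittingLevel T U p b γ) :
    ∀ q ∈ (addLevel T U p γ).F, ∀ c ∈ (addLevel T U p γ).A, T.ht q.1 < c →
      ∃ r ∈ (addLevel T U p γ).F, T.ht r.1 = c ∧ T.lt q.1 r.1 := by
  have hp := h.isCond
  rintro q (hq | ⟨q₀, ⟨hq₀, hγq₀⟩, rfl⟩) c (rfl | hc) hqc
  · obtain ⟨r, hr, hrb, hqr⟩ := hp.exists_mem_ht_eq hq h.mem_A (hqc.trans h.lt)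
    have hγr : c < T.ht r.1 := hrb ▸ h.lt
    exact ⟨projPair T U c r, Or.inr ⟨r, ⟨hr, hγr⟩, rfl⟩, T.ht_proj hγr,
      T.lt_proj_of_lt hqr hqc hγr⟩
  · obtain ⟨r, hr, hrc, hqr⟩ := hp.exists_mem_ht_eq hq hc hqc
    exact ⟨r, Or.inl hr, hrc, hqr⟩
  · exact absurd hqc (T.ht_proj hγq₀).not_lt
  · obtain ⟨r, hr, hrc, hqr⟩ :=
      hp.exists_mem_ht_eq_of_lt hq₀ (T.proj_lt hγq₀) hc (T.ht_proj hγq₀ ▸ hqc)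
    exact ⟨r, Or.inl hr, hrc, hqr⟩

theorem ht_snd (h : IsSplittingLevel T U p b γ) :
    ∀ q ∈ (addLevel T U p γ).F, U.ht q.2 = T.ht q.1 := by
  rintro q (hq | ⟨q₀, ⟨hq₀, hγq₀⟩, rfl⟩)
  · exact h.isCond.ht_snd hq
  · exact (U.ht_proj (h.isCond.lt_ht_snd hq₀ hγq₀)).trans (T.ht_proj hγq₀).symm

theorem snd_lt_snd (h : IsSplittingLevel T U p b γ) :
    ∀ q ∈ (addLevel T U p γ).F, ∀ r ∈ (addLevel T U p γ).F, T.lt q.1 r.1 → U.lt q.2 r.2 := by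
  have hp := h.isCond
  rintro q (hq | ⟨q₀, ⟨hq₀, hγq₀⟩, rfl⟩) r (hr | ⟨r₀, ⟨hr₀, hγr₀⟩, rfl⟩) hqr
  · exact hp.snd_lt_snd hq hr hqr
  · have hqγ : T.ht q.1 < γ := T.ht_proj hγr₀ ▸ T.ht_lt_ht hqr
    exact U.lt_proj_of_lt (hp.snd_lt_snd hq hr₀ (T.trans hqr (T.proj_lt hγr₀)))
      (hp.ht_snd hq ▸ hqγ) (hp.lt_ht_snd hr₀ hγr₀)
  · have hγr : γ < T.ht r.1 := T.ht_proj hγq₀ ▸ T.ht_lt_ht hqr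
    have hsnd := (h.projPair_fst_eq_iff hr hq₀ hγr hγq₀).1 (T.proj_eq_of_lt hqr (T.ht_proj hγq₀))
    exact hsnd ▸ U.proj_lt (hp.lt_ht_snd hr hγr)
  · exact absurd (T.ht_lt_ht hqr) ((T.ht_proj hγq₀).trans (T.ht_proj hγr₀).symm).not_lt

theorem isCond_addLevel (h : IsSplittingLevel T U p b γ) : IsCond T U (addLevel T U p γ) :=
  ⟨h.isCond.countable_A.insert γ, Set.insert_subset h.mem_cofW1 h.isCond.A_subset_cofW1,
    h.snd_eq_of_fst_eq, h.fst_eq_of_snd_eq, h.countable_dom, h.ht_mem_A, h.mem_dom_of_lt,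
    h.exists_mem_ht_eq, h.ht_snd, h.snd_lt_snd⟩

theorem injOn'_addLevel (h : IsSplittingLevel T U p b γ) : InjOn' T (addLevel T U p γ) b := by
  have hmem : ∀ q ∈ (addLevel T U p γ).F, T.ht q.1 = b → q ∈ p.F := by
    rintro q (hq | ⟨q₀, ⟨-, hγq₀⟩, rfl⟩) hqb
    · exact hq
    · exact absurd ((T.ht_proj hγq₀).symm.trans hqb) h.lt.ne
  intro q hq r hr hqb hrb hqr
  refine ⟨γ, Set.mem_insert γ p.A, h.lt, fun z w hz hzγ hw hwγ hzw => ?_⟩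
  refine (h.proj_ne q (hmem q hq hqb) r (hmem r hr hrb) hqb hrb hqr).1 ?_
  rw [← T.eq_proj_of_le hz hzγ (hqb ▸ h.lt), ← T.eq_proj_of_le hw hwγ (hrb ▸ h.lt), hzw]

end IsSplittingLevel

end AddLevel

theorem IsCond.exists_isSplittingLevel {α β : Type u} {T : STree α} {U : STree β}
    {p : PPair α β} {b : Ordinal.{u}} {κ : Cardinal.{u}} (hT : T.IsNormalTree κ)
    (hU : U.IsNormalTree κ) (hp : IsCond T U p) (hbA : b ∈ p.A)
    (hblim : ∀ γ < b, ∃ δ ∈ cofW1, γ < δ ∧ δ < b) : ∃ γ, IsSplittingLevel T U p b γ := by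
  have hbcof : b.cof = Cardinal.aleph 1 := (hp.A_subset_cofW1 hbA).2
  have hb : Order.IsSuccLimit b :=
    Ordinal.one_lt_cof_iff.1 (hbcof ▸ Cardinal.one_lt_aleph0.trans_le (Cardinal.aleph0_le_aleph 1))
  set S := {e : (α × β) × (α × β) |
    e.1 ∈ p.F ∧ e.2 ∈ p.F ∧ T.ht e.1.1 = b ∧ T.ht e.2.1 = b ∧ e.1.1 ≠ e.2.1}
  have hS : S.Countable :=
    (hp.countable_F.prod hp.countable_F).mono fun _ he => Set.mk_mem_prod he.1 he.2.1
  have hsplit : ∀ e ∈ S, ∃ δ < b, ∀ γ, δ < γ → γ < b →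
      T.proj e.1.1 γ ≠ T.proj e.2.1 γ ∧ U.proj e.1.2 γ ≠ U.proj e.2.2 γ := by
    rintro ⟨q, r⟩ ⟨hq, hr, rfl, hrb, hqr⟩
    exact hp.exists_proj_ne hT hU hq hr hqr hrb.symm hb
  choose! δ hδb hδ using hsplit
  obtain ⟨γ, hγ, hCγ, hγb⟩ := exists_mem_cofW1_forall_lt hbcof hblim
    ((hp.countable_A.mono Set.inter_subset_left).union (hS.image δ))
    (by rintro _ (⟨-, hc⟩ | ⟨e, he, rfl⟩); exacts [hc, hδb e he])
  refine ⟨γ, hp, hγ, hbA, hγb, fun c hc hcb => hCγ c (Or.inl ⟨hc, hcb⟩), ?_⟩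
  intro q hq r hr hqb hrb hqr
  have he : (q, r) ∈ S := ⟨hq, hr, hqb, hrb, hqr⟩
  exact hδ _ he γ (hCγ _ (Or.inr ⟨_, he, rfl⟩)) hγb

theorem statement_16_general {α β : Type u} (T : STree α) (U : STree β)
    (hT : NiceTree T) (hU : NiceTree U)
    (p : PPair α β) (hp : IsCond T U p)
    (b : Ordinal) (hbA : b ∈ p.A)
    (hblim : ∀ γ < b, ∃ δ ∈ cofW1, γ < δ ∧ δ < b) :
    ∃ q : PPair α β, IsCond T U q ∧ CondLe q p ∧ InjOn' T q b := by
  obtain ⟨γ, hγ⟩ := hp.exists_isSplittingLevel hT.2.1 hU.2.1 hbA hblim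
  exact ⟨addLevel T U p γ, hγ.isCond_addLevel, condLe_addLevel, hγ.injOn'_addLevel⟩

theorem statement_16 (hCH : CH) {α β : Type u} (T : STree α) (U : STree β)
    (hT : NiceTree T) (hU : NiceTree U)
    (p : PPair α β) (hp : IsCond T U p)
    (b : Ordinal) (hbA : b ∈ p.A)
    (hblim : ∀ γ < b, ∃ δ ∈ cofW1, γ < δ ∧ δ < b) :
    ∃ q : PPair α β, IsCond T U q ∧ CondLe q p ∧ InjOn' T q b :=
  statement_16_general T U hT hU p hp b hbA hblim
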